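/- arXiv:1302.1349 — 2 statements merged into one kernel-verified Lean document; each statement's English description precedes it below -/
import Mathlib

section
/- Let S be a nonempty set, let d ≥ 1 be an integer, and let T₁, …, T_d : S → ℝ be functions each bounded above on S. Let Δ_d = {λ ∈ ℝ^d : λᵢ ≥ 0 for all i and Σᵢ λᵢ = 1} be the d-dimensional simplex. Suppose that the set A = {(a₁, …, a_d) ∈ ℝ^d : there exists s ∈ S with aᵢ ≤ Tᵢ(s) for all i} is convex. Then sup_{s ∈ S} min_{λ ∈ Δ_d} Σᵢ λᵢ Tᵢ(s) = inf_{λ ∈ Δ_d} sup_{s ∈ S} Σᵢ λᵢ Tᵢ(s). -/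
/-- Terkelsen-type minimax principle (Corollary 1 of the paper):
if each `T i` is bounded above on the nonempty set `S` and the set
`A = {a : ∃ s, ∀ i, a i ≤ T i s}` is convex, then the sup–min over the
simplex equals the inf–sup. -/
theorem terkelsen_minimax {S : Type*} [Nonempty S] (d : ℕ) (hd : 1 ≤ d)
    (T : Fin d → S → ℝ) (hT : ∀ i, BddAbove (Set.range (T i)))
    (hA : Convex ℝ {p : Fin d → ℝ | ∃ s : S, ∀ i, p i ≤ T i s}) :
    (⨆ s : S, ⨅ lam : {l : Fin d → ℝ // (∀ i, 0 ≤ l i) ∧ ∑ i, l i = 1},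
        ∑ i, lam.1 i * T i s)
      =
    (⨅ lam : {l : Fin d → ℝ // (∀ i, 0 ≤ l i) ∧ ∑ i, l i = 1},
        ⨆ s : S, ∑ i, lam.1 i * T i s) := by
  classical
  set A : Set (Fin d → ℝ) := {p : Fin d → ℝ | ∃ s : S, ∀ i, p i ≤ T i s} with hAdef
  set Λ := {l : Fin d → ℝ // (∀ i, 0 ≤ l i) ∧ ∑ i, l i = 1} with hΛdef
  set F : S → Λ → ℝ := fun s lam => ∑ i, lam.1 i * T i s with hFdef
  have hdpos : (0 : ℝ) < d := by exact_mod_cast Nat.lt_of_lt_of_le Nat.zero_lt_one hd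
  -- a canonical element of the simplex
  have hΛne : Nonempty Λ := by
    refine ⟨⟨fun _ => (d : ℝ)⁻¹, fun i => by positivity, ?_⟩⟩
    simp [Finset.sum_const, Finset.card_univ]
    field_simp
  -- choose upper bounds for each T i
  have hM : ∀ i, ∃ Mi : ℝ, ∀ s, T i s ≤ Mi := by
    intro i
    obtain ⟨Mi, hMi⟩ := hT i
    exact ⟨Mi, fun s => hMi ⟨s, rfl⟩⟩
  choose M hMle using hM
  have huniv : (Finset.univ : Finset (Fin d)).Nonempty := by
    refine ⟨⟨0, hd⟩, Finset.mem_univ _⟩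
  -- lower bound for F s lam over lam
  set b : S → ℝ := fun s => Finset.univ.inf' huniv (fun i => T i s) with hbdef
  have hlow : ∀ s (lam : Λ), b s ≤ F s lam := by
    intro s lam
    have : ∑ i, lam.1 i * b s ≤ ∑ i, lam.1 i * T i s := by
      apply Finset.sum_le_sum
      intro i _
      exact mul_le_mul_of_nonneg_left (Finset.inf'_le _ (Finset.mem_univ i)) (lam.2.1 i)
    calc b s = (∑ i, lam.1 i) * b s := by rw [lam.2.2, one_mul]
    _ = ∑ i, lam.1 i * b s := by rw [Finset.sum_mul]
    _ ≤ F s lam := this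
  -- upper bound for F s lam over s
  have hhigh : ∀ (lam : Λ) s, F s lam ≤ ∑ i, lam.1 i * M i := by
    intro lam s
    apply Finset.sum_le_sum
    intro i _
    exact mul_le_mul_of_nonneg_left (hMle i s) (lam.2.1 i)
  have hbddS : ∀ lam : Λ, BddAbove (Set.range fun s => F s lam) := by
    intro lam
    exact ⟨_, by rintro x ⟨s, rfl⟩; exact hhigh lam s⟩
  have hbddΛ : ∀ s, BddBelow (Set.range fun lam : Λ => F s lam) := by
    intro s
    exact ⟨b s, by rintro x ⟨lam, rfl⟩; exact hlow s lam⟩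
  -- the sup-min family is bounded above
  have hsupminbdd : BddAbove (Set.range fun s => ⨅ lam : Λ, F s lam) := by
    obtain ⟨lam0⟩ := hΛne
    refine ⟨∑ i, lam0.1 i * M i, ?_⟩
    rintro x ⟨s, rfl⟩
    exact le_trans (ciInf_le (hbddΛ s) lam0) (hhigh lam0 s)
  -- the inf-sup family is bounded below
  have hs0 : S := Classical.arbitrary S
  have hinfsupbdd : BddBelow (Set.range fun lam : Λ => ⨆ s, F s lam) := by
    refine ⟨b hs0, ?_⟩
    rintro x ⟨lam, rfl⟩
    exact le_trans (hlow hs0 lam) (le_ciSup (hbddS lam) hs0)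
  set L : ℝ := ⨆ s : S, ⨅ lam : Λ, F s lam with hLdef
  set R : ℝ := ⨅ lam : Λ, ⨆ s : S, F s lam with hRdef
  have easy : L ≤ R := by
    apply ciSup_le
    intro s
    apply le_ciInf
    intro lam
    exact le_trans (ciInf_le (hbddΛ s) lam) (le_ciSup (hbddS lam) s)
  refine le_antisymm easy ?_
  by_contra hcon
  push_neg at hcon
  set c : ℝ := (L + R) / 2 with hcdef
  have hcL : L < c := by simp only [hcdef]; linarith
  have hcR : c < R := by simp only [hcdef]; linarith
  -- c·1 is not in the closure of A
  have hnotin : (fun _ => c : Fin d → ℝ) ∉ closure A := by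
    intro hmem
    have key : ∀ ε : ℝ, 0 < ε → c ≤ L + ε := by
      intro ε hε
      obtain ⟨a, haA, hdist⟩ := Metric.mem_closure_iff.1 hmem ε hε
      obtain ⟨s, hs⟩ := haA
      have hTs : ∀ i, c - ε < T i s := by
        intro i
        have h1 := (dist_pi_lt_iff hε).1 hdist i
        rw [Real.dist_eq] at h1
        have h2 := abs_lt.1 h1
        have h3 := hs i
        linarith [h2.1, h2.2]
      have hFge : ∀ lam : Λ, c - ε ≤ F s lam := by
        intro lam
        have hsum : ∑ i, lam.1 i * (c - ε) ≤ ∑ i, lam.1 i * T i s := by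
          apply Finset.sum_le_sum
          intro i _
          exact mul_le_mul_of_nonneg_left (le_of_lt (hTs i)) (lam.2.1 i)
        calc c - ε = (∑ i, lam.1 i) * (c - ε) := by rw [lam.2.2, one_mul]
        _ = ∑ i, lam.1 i * (c - ε) := by rw [Finset.sum_mul]
        _ ≤ F s lam := hsum
      have h1 : c - ε ≤ ⨅ lam : Λ, F s lam := le_ciInf hFge
      have h2 : (⨅ lam : Λ, F s lam) ≤ L := le_ciSup hsupminbdd s
      linarith
    have : c ≤ L := le_of_forall_pos_le_add key
    linarith
  -- separate c·1 from closure A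
  obtain ⟨f, u, hfu, hufc⟩ :=
    geometric_hahn_banach_closed_point (hA.closure) isClosed_closure hnotin
  set e : Fin d → (Fin d → ℝ) := fun i => fun j => if i = j then 1 else 0 with hedef
  set w : Fin d → ℝ := fun i => f (e i) with hwdef
  have hfa : ∀ a : Fin d → ℝ, f a = ∑ i, a i * w i := by
    intro a
    conv_lhs => rw [pi_eq_sum_univ a]
    rw [map_sum]
    simp [w, e, smul_eq_mul]
  have hs0mem : (fun i => T i hs0) ∈ A := ⟨hs0, fun i => le_refl _⟩
  have hfa0 : f (fun i => T i hs0) < u := hfu _ (subset_closure hs0mem)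
  -- w is nonneg
  have hw0 : ∀ i, 0 ≤ w i := by
    intro i
    by_contra hneg
    push_neg at hneg
    set t : ℝ := (f (fun i => T i hs0) - u - 1) / w i with htdef
    have ht0 : 0 ≤ t := by
      rw [div_nonneg_iff]
      right
      constructor <;> linarith
    have hmem : ((fun i => T i hs0) - t • e i) ∈ A := by
      refine ⟨hs0, fun j => ?_⟩
      simp only [Pi.sub_apply, Pi.smul_apply, smul_eq_mul, e]
      have : 0 ≤ t * (if i = j then (1:ℝ) else 0) := by positivity
      linarith
    have hlt : f ((fun i => T i hs0) - t • e i) < u := hfu _ (subset_closure hmem)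
    rw [map_sub, map_smul, smul_eq_mul] at hlt
    have htw : t * w i = f (fun i => T i hs0) - u - 1 := by
      rw [htdef, div_mul_cancel₀]
      exact ne_of_lt hneg
    simp only [hwdef] at htw
    rw [htw] at hlt
    linarith
  -- sum of w is positive
  have hfc1 : f (fun _ => c) = c * ∑ i, w i := by
    rw [hfa]
    rw [Finset.mul_sum]
  have hWpos : 0 < ∑ i, w i := by
    rcases lt_or_eq_of_le (Finset.sum_nonneg fun i _ => hw0 i) with h | h
    · exact h
    · exfalso
      have hall : ∀ i ∈ Finset.univ, w i = 0 :=
        (Finset.sum_eq_zero_iff_of_nonneg fun i _ => hw0 i).1 h.symm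
      have h1 : f (fun i => T i hs0) = 0 := by
        rw [hfa]
        apply Finset.sum_eq_zero
        intro i hi
        rw [hall i hi, mul_zero]
      have h2 : f (fun _ => c) = 0 := by
        rw [hfc1, ← h, mul_zero]
      rw [h1] at hfa0
      rw [h2] at hufc
      linarith
  set W : ℝ := ∑ i, w i with hWdef
  -- the normalized lambda
  set lamf : Fin d → ℝ := fun i => w i / W with hlamf
  have hlam : (∀ i, 0 ≤ lamf i) ∧ ∑ i, lamf i = 1 := by
    constructor
    · intro i; exact div_nonneg (hw0 i) (le_of_lt hWpos)
    · rw [hlamf, ← Finset.sum_div, ← hWdef, div_self (ne_of_gt hWpos)]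
  set lam : Λ := ⟨lamf, hlam⟩ with hlamdef
  have hFlt : ∀ s : S, F s lam ≤ u / W := by
    intro s
    have hmem : (fun i => T i s) ∈ A := ⟨s, fun i => le_refl _⟩
    have hflt : f (fun i => T i s) < u := hfu _ (subset_closure hmem)
    have heq : F s lam = f (fun i => T i s) / W := by
      rw [hfa, Finset.sum_div]
      apply Finset.sum_congr rfl
      intro i _
      simp only [hFdef, lam, lamf]
      ring
    rw [heq]
    exact (div_le_div_iff_of_pos_right hWpos).mpr hflt.le
  have hultc : u / W < c := by
    have : u < f (fun _ => c) := hufc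
    rw [hfc1] at this
    rw [div_lt_iff₀ hWpos]
    linarith [this]
  have hRle : R ≤ u / W := by
    refine le_trans (ciInf_le hinfsupbdd lam) ?_
    exact ciSup_le hFlt
  linarith
end

section
/- The function C̃₁ is concave on the convex domain Ω = {(P₁,P₂) ∈ ℝ² : P₁ ≥ 0, P₂ ≥ 0, a²P₁ ≥ b²P₂}. Moreover, for every fixed P₂ ≥ 0, the map P₁ ↦ C̃₁(P₁,P₂) is strictly concave and nondecreasing on {P₁ ≥ 0 : a²P₁ ≥ b²P₂}, and C̃₁ is nonnegative on Ω. -/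
/-- `C(x) = (1/2) log(1+x)` (natural logarithm). -/
noncomputable def Cfun (x : ℝ) : ℝ := Real.log (1 + x) / 2

/-- `C̃₁(P₁,P₂) = C((√(a²P₁ − b²P₂) + b√((a²−1)P₂))² / (a²N))`. -/
noncomputable def Ct1 (a b N P1 P2 : ℝ) : ℝ :=
  Cfun ((Real.sqrt (a ^ 2 * P1 - b ^ 2 * P2) + b * Real.sqrt ((a ^ 2 - 1) * P2)) ^ 2
    / (a ^ 2 * N))


open Real Set

lemma sq_expand (u v b : ℝ) (hu : 0 ≤ u) (hv : 0 ≤ v) :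
    (Real.sqrt v + b * Real.sqrt u) ^ 2 = v + b ^ 2 * u + 2 * b * Real.sqrt (u * v) := by
  have h : Real.sqrt u * Real.sqrt v = Real.sqrt (u * v) := (Real.sqrt_mul hu v).symm
  linear_combination Real.sq_sqrt hv + b ^ 2 * Real.sq_sqrt hu + 2 * b * h

lemma Ct1_eq (a b N P1 P2 : ℝ) (hu : 0 ≤ (a ^ 2 - 1) * P2) (hv : 0 ≤ a ^ 2 * P1 - b ^ 2 * P2) :
    Ct1 a b N P1 P2 = Real.log (1 + (a ^ 2 * P1 - b ^ 2 * P2 + b ^ 2 * ((a ^ 2 - 1) * P2)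
      + 2 * b * Real.sqrt (((a ^ 2 - 1) * P2) * (a ^ 2 * P1 - b ^ 2 * P2))) / (a ^ 2 * N)) / 2 := by
  unfold Ct1 Cfun
  rw [sq_expand _ _ _ hu hv]


lemma gm_ineq {A B C D t s : ℝ} (hA : 0 ≤ A) (hB : 0 ≤ B) (hC : 0 ≤ C) (hD : 0 ≤ D)
    (ht : 0 ≤ t) (hs : 0 ≤ s) :
    t * Real.sqrt (A * B) + s * Real.sqrt (C * D) ≤
      Real.sqrt ((t * A + s * C) * (t * B + s * D)) := by
  obtain ⟨a, ha, rfl⟩ : ∃ x, 0 ≤ x ∧ A = x ^ 2 := ⟨Real.sqrt A, Real.sqrt_nonneg A, (Real.sq_sqrt hA).symm⟩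
  obtain ⟨b, hb, rfl⟩ : ∃ x, 0 ≤ x ∧ B = x ^ 2 := ⟨Real.sqrt B, Real.sqrt_nonneg B, (Real.sq_sqrt hB).symm⟩
  obtain ⟨c, hc, rfl⟩ : ∃ x, 0 ≤ x ∧ C = x ^ 2 := ⟨Real.sqrt C, Real.sqrt_nonneg C, (Real.sq_sqrt hC).symm⟩
  obtain ⟨d, hd, rfl⟩ : ∃ x, 0 ≤ x ∧ D = x ^ 2 := ⟨Real.sqrt D, Real.sqrt_nonneg D, (Real.sq_sqrt hD).symm⟩
  rw [← mul_pow, ← mul_pow, Real.sqrt_sq (mul_nonneg ha hb), Real.sqrt_sq (mul_nonneg hc hd)]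
  rw [Real.le_sqrt (by positivity) (by positivity)]
  nlinarith [sq_nonneg (a * d - c * b), mul_nonneg ht hs, sq_nonneg (a*b - c*d)]

lemma log_step {t s Xp Xq Xm : ℝ} (ht : 0 ≤ t) (hs : 0 ≤ s) (hts : t + s = 1)
    (hXp1 : 1 ≤ Xp) (hXq1 : 1 ≤ Xq) (hmid : t * Xp + s * Xq ≤ Xm) :
    t * (Real.log Xp / 2) + s * (Real.log Xq / 2) ≤ Real.log Xm / 2 := by
  have hpos : (0 : ℝ) < t * Xp + s * Xq := by nlinarith
  have hlog1 : t * Real.log Xp + s * Real.log Xq ≤ Real.log (t * Xp + s * Xq) := by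
    have := strictConcaveOn_log_Ioi.concaveOn.2 (mem_Ioi.mpr (by linarith : (0:ℝ) < Xp))
      (mem_Ioi.mpr (by linarith : (0:ℝ) < Xq)) ht hs hts
    simpa [smul_eq_mul] using this
  have hlog2 : Real.log (t * Xp + s * Xq) ≤ Real.log Xm := Real.log_le_log hpos hmid
  linarith

lemma log_step_strict {t s Xp Xq Xm : ℝ} (ht : 0 < t) (hs : 0 < s) (hts : t + s = 1)
    (hXp1 : 1 ≤ Xp) (hXq1 : 1 ≤ Xq) (hne : Xp ≠ Xq) (hmid : t * Xp + s * Xq ≤ Xm) :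
    t * (Real.log Xp / 2) + s * (Real.log Xq / 2) < Real.log Xm / 2 := by
  have hpos : (0 : ℝ) < t * Xp + s * Xq := by nlinarith
  have hlog1 : t * Real.log Xp + s * Real.log Xq < Real.log (t * Xp + s * Xq) := by
    have := strictConcaveOn_log_Ioi.2 (mem_Ioi.mpr (by linarith : (0:ℝ) < Xp))
      (mem_Ioi.mpr (by linarith : (0:ℝ) < Xq)) hne ht hs hts
    simpa [smul_eq_mul] using this
  have hlog2 : Real.log (t * Xp + s * Xq) ≤ Real.log Xm := Real.log_le_log hpos hmid
  linarith

/-- Joint concavity master step. -/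
lemma concave_main (b c B t s up vp uq vq um vm : ℝ)
    (hb : 0 ≤ b) (hc : 0 < c) (hB : 0 ≤ B)
    (hup : 0 ≤ up) (hvp : 0 ≤ vp) (huq : 0 ≤ uq) (hvq : 0 ≤ vq)
    (ht : 0 ≤ t) (hs : 0 ≤ s) (hts : t + s = 1)
    (hum : um = t * up + s * uq) (hvm : vm = t * vp + s * vq) :
    t * (Real.log (1 + (vp + B * up + 2 * b * Real.sqrt (up * vp)) / c) / 2)
      + s * (Real.log (1 + (vq + B * uq + 2 * b * Real.sqrt (uq * vq)) / c) / 2)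
      ≤ Real.log (1 + (vm + B * um + 2 * b * Real.sqrt (um * vm)) / c) / 2 := by
  refine log_step ht hs hts ?_ ?_ ?_
  · have h0 : 0 ≤ (vp + B * up + 2 * b * Real.sqrt (up * vp)) / c := by positivity
    linarith
  · have h0 : 0 ≤ (vq + B * uq + 2 * b * Real.sqrt (uq * vq)) / c := by positivity
    linarith
  · have hgm := gm_ineq hup hvp huq hvq ht hs
    have hnum : t * (vp + B * up + 2 * b * Real.sqrt (up * vp))
        + s * (vq + B * uq + 2 * b * Real.sqrt (uq * vq))
        ≤ vm + B * um + 2 * b * Real.sqrt (um * vm) := by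
      rw [hum, hvm]
      nlinarith [mul_le_mul_of_nonneg_left hgm (by linarith : (0:ℝ) ≤ 2 * b)]
    have h1 : (t * (vp + B * up + 2 * b * Real.sqrt (up * vp))
        + s * (vq + B * uq + 2 * b * Real.sqrt (uq * vq))) / c
        ≤ (vm + B * um + 2 * b * Real.sqrt (um * vm)) / c := by gcongr
    have h2 : t * (1 + (vp + B * up + 2 * b * Real.sqrt (up * vp)) / c)
        + s * (1 + (vq + B * uq + 2 * b * Real.sqrt (uq * vq)) / c)
        = (t + s) + (t * (vp + B * up + 2 * b * Real.sqrt (up * vp))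
          + s * (vq + B * uq + 2 * b * Real.sqrt (uq * vq))) / c := by ring
    rw [h2, hts]; linarith

/-- 1D strict concavity master step. -/
lemma strict_main (b c B t s u vx vy vm : ℝ)
    (hb : 0 ≤ b) (hc : 0 < c) (hB : 0 ≤ B)
    (hu : 0 ≤ u) (hvx : 0 ≤ vx) (hvy : 0 ≤ vy) (hne : vx ≠ vy)
    (ht : 0 < t) (hs : 0 < s) (hts : t + s = 1) (hvm : vm = t * vx + s * vy) :
    t * (Real.log (1 + (vx + B * u + 2 * b * Real.sqrt (u * vx)) / c) / 2)
      + s * (Real.log (1 + (vy + B * u + 2 * b * Real.sqrt (u * vy)) / c) / 2)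
      < Real.log (1 + (vm + B * u + 2 * b * Real.sqrt (u * vm)) / c) / 2 := by
  have hLmono : ∀ w z : ℝ, 0 ≤ w → w < z →
      (1 + (w + B * u + 2 * b * Real.sqrt (u * w)) / c)
        < (1 + (z + B * u + 2 * b * Real.sqrt (u * z)) / c) := by
    intro w z hw hwz
    have hsq : Real.sqrt (u * w) ≤ Real.sqrt (u * z) := by
      apply Real.sqrt_le_sqrt; nlinarith
    have hnum : (w + B * u + 2 * b * Real.sqrt (u * w)) < (z + B * u + 2 * b * Real.sqrt (u * z)) := by
      nlinarith
    have h3 : (w + B * u + 2 * b * Real.sqrt (u * w)) / c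
        < (z + B * u + 2 * b * Real.sqrt (u * z)) / c := by
      exact div_lt_div_of_pos_right hnum hc
    linarith
  refine log_step_strict ht hs hts ?_ ?_ ?_ ?_
  · have h0 : 0 ≤ (vx + B * u + 2 * b * Real.sqrt (u * vx)) / c := by positivity
    linarith
  · have h0 : 0 ≤ (vy + B * u + 2 * b * Real.sqrt (u * vy)) / c := by positivity
    linarith
  · rcases hne.lt_or_gt with h | h
    · exact ne_of_lt (hLmono _ _ hvx h)
    · exact ne_of_gt (hLmono _ _ hvy h)
  · have hgm := gm_ineq hu hvx hu hvy ht.le hs.le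
    have huu : t * u + s * u = u := by linear_combination u * hts
    rw [huu] at hgm
    have hnum : t * (vx + B * u + 2 * b * Real.sqrt (u * vx))
        + s * (vy + B * u + 2 * b * Real.sqrt (u * vy))
        ≤ vm + B * u + 2 * b * Real.sqrt (u * vm) := by
      rw [hvm]
      nlinarith [mul_le_mul_of_nonneg_left hgm (by linarith : (0:ℝ) ≤ 2 * b), hts]
    have h1 : (t * (vx + B * u + 2 * b * Real.sqrt (u * vx))
        + s * (vy + B * u + 2 * b * Real.sqrt (u * vy))) / c
        ≤ (vm + B * u + 2 * b * Real.sqrt (u * vm)) / c := by gcongr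
    have h2 : t * (1 + (vx + B * u + 2 * b * Real.sqrt (u * vx)) / c)
        + s * (1 + (vy + B * u + 2 * b * Real.sqrt (u * vy)) / c)
        = (t + s) + (t * (vx + B * u + 2 * b * Real.sqrt (u * vx))
          + s * (vy + B * u + 2 * b * Real.sqrt (u * vy))) / c := by ring
    rw [h2, hts]; linarith

/-- Properties of the rate function `C̃₁` used in Lemmas 1 and 2 of the paper:
it is concave on `Ω = {(P₁,P₂) : P₁ ≥ 0, P₂ ≥ 0, a²P₁ ≥ b²P₂}`; for each fixed
`P₂ ≥ 0` the map `P₁ ↦ C̃₁(P₁,P₂)` is strictly concave and nondecreasing on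
`{P₁ ≥ 0 : a²P₁ ≥ b²P₂}`; and `C̃₁` is nonnegative on `Ω`. -/
theorem Ct1_concave_monotone_nonneg (a b N : ℝ) (ha : 1 < a) (hb : 0 < b) (hN : 0 < N) :
    ConcaveOn ℝ {p : ℝ × ℝ | 0 ≤ p.1 ∧ 0 ≤ p.2 ∧ b ^ 2 * p.2 ≤ a ^ 2 * p.1}
      (fun p => Ct1 a b N p.1 p.2) ∧
    (∀ P2 : ℝ, 0 ≤ P2 →
      StrictConcaveOn ℝ {P1 : ℝ | 0 ≤ P1 ∧ b ^ 2 * P2 ≤ a ^ 2 * P1}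
        (fun P1 => Ct1 a b N P1 P2) ∧
      MonotoneOn (fun P1 => Ct1 a b N P1 P2)
        {P1 : ℝ | 0 ≤ P1 ∧ b ^ 2 * P2 ≤ a ^ 2 * P1}) ∧
    (∀ p : ℝ × ℝ, (0 ≤ p.1 ∧ 0 ≤ p.2 ∧ b ^ 2 * p.2 ≤ a ^ 2 * p.1) →
      0 ≤ Ct1 a b N p.1 p.2) := by
  have ha2 : (1 : ℝ) < a ^ 2 := by nlinarith
  have haN : (0 : ℝ) < a ^ 2 * N := by positivity
  refine ⟨⟨?_, ?_⟩, ?_, ?_⟩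
  · -- convexity of Ω
    intro p hp q hq t s ht hs hts
    obtain ⟨hp1, hp2, hp3⟩ := hp
    obtain ⟨hq1, hq2, hq3⟩ := hq
    refine ⟨?_, ?_, ?_⟩ <;>
      simp only [Prod.smul_fst, Prod.smul_snd, Prod.fst_add, Prod.snd_add, smul_eq_mul]
    · nlinarith [mul_nonneg ht hp1, mul_nonneg hs hq1]
    · nlinarith [mul_nonneg ht hp2, mul_nonneg hs hq2]
    · nlinarith [mul_le_mul_of_nonneg_left hp3 ht, mul_le_mul_of_nonneg_left hq3 hs]
  · -- joint concavity inequality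
    intro p hp q hq t s ht hs hts
    obtain ⟨hp1, hp2, hp3⟩ := hp
    obtain ⟨hq1, hq2, hq3⟩ := hq
    have hm1 : (t • p + s • q).1 = t * p.1 + s * q.1 := by simp [smul_eq_mul]
    have hm2 : (t • p + s • q).2 = t * p.2 + s * q.2 := by simp [smul_eq_mul]
    have hup : 0 ≤ (a ^ 2 - 1) * p.2 := mul_nonneg (by linarith) hp2
    have huq : 0 ≤ (a ^ 2 - 1) * q.2 := mul_nonneg (by linarith) hq2
    have hvp : 0 ≤ a ^ 2 * p.1 - b ^ 2 * p.2 := by linarith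
    have hvq : 0 ≤ a ^ 2 * q.1 - b ^ 2 * q.2 := by linarith
    have hum : 0 ≤ (a ^ 2 - 1) * (t * p.2 + s * q.2) := by
      nlinarith [mul_nonneg ht hp2, mul_nonneg hs hq2]
    have hvm : 0 ≤ a ^ 2 * (t * p.1 + s * q.1) - b ^ 2 * (t * p.2 + s * q.2) := by
      nlinarith [mul_le_mul_of_nonneg_left hp3 ht, mul_le_mul_of_nonneg_left hq3 hs]
    simp only [smul_eq_mul]
    rw [Ct1_eq a b N p.1 p.2 hup hvp, Ct1_eq a b N q.1 q.2 huq hvq, hm1, hm2,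
      Ct1_eq a b N (t * p.1 + s * q.1) (t * p.2 + s * q.2) hum hvm]
    exact concave_main b (a ^ 2 * N) (b ^ 2) t s ((a ^ 2 - 1) * p.2) (a ^ 2 * p.1 - b ^ 2 * p.2)
      ((a ^ 2 - 1) * q.2) (a ^ 2 * q.1 - b ^ 2 * q.2)
      ((a ^ 2 - 1) * (t * p.2 + s * q.2)) (a ^ 2 * (t * p.1 + s * q.1) - b ^ 2 * (t * p.2 + s * q.2))
      hb.le haN (by positivity) hup hvp huq hvq ht hs hts (by ring) (by ring)
  · -- 1D properties
    intro P2 hP2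
    have hu : 0 ≤ (a ^ 2 - 1) * P2 := mul_nonneg (by linarith) hP2
    constructor
    · constructor
      · intro x hx y hy t s ht hs hts
        obtain ⟨hx1, hx2⟩ := hx
        obtain ⟨hy1, hy2⟩ := hy
        have h3 : t * (b ^ 2 * P2) + s * (b ^ 2 * P2) = b ^ 2 * P2 := by
          linear_combination (b ^ 2 * P2) * hts
        refine ⟨?_, ?_⟩ <;> simp only [smul_eq_mul]
        · nlinarith [mul_nonneg ht hx1, mul_nonneg hs hy1]
        · nlinarith [mul_le_mul_of_nonneg_left hx2 ht, mul_le_mul_of_nonneg_left hy2 hs]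
      · intro x hx y hy hxy t s ht hs hts
        obtain ⟨hx1, hx2⟩ := hx
        obtain ⟨hy1, hy2⟩ := hy
        have hvx : 0 ≤ a ^ 2 * x - b ^ 2 * P2 := by linarith
        have hvy : 0 ≤ a ^ 2 * y - b ^ 2 * P2 := by linarith
        have h3 : t * (b ^ 2 * P2) + s * (b ^ 2 * P2) = b ^ 2 * P2 := by
          linear_combination (b ^ 2 * P2) * hts
        have hvm : 0 ≤ a ^ 2 * (t * x + s * y) - b ^ 2 * P2 := by
          nlinarith [mul_le_mul_of_nonneg_left hx2 ht.le, mul_le_mul_of_nonneg_left hy2 hs.le]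
        simp only [smul_eq_mul]
        rw [Ct1_eq a b N x P2 hu hvx, Ct1_eq a b N y P2 hu hvy,
          Ct1_eq a b N (t * x + s * y) P2 hu hvm]
        exact strict_main b (a ^ 2 * N) (b ^ 2) t s ((a ^ 2 - 1) * P2)
          (a ^ 2 * x - b ^ 2 * P2) (a ^ 2 * y - b ^ 2 * P2)
          (a ^ 2 * (t * x + s * y) - b ^ 2 * P2)
          hb.le haN (by positivity) hu hvx hvy
          (by intro h; exact hxy (by nlinarith [h])) ht hs hts (by linear_combination (b ^ 2 * P2) * hts)
    · intro x hx y hy hxy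
      obtain ⟨hx1, hx2⟩ := hx
      obtain ⟨hy1, hy2⟩ := hy
      simp only [Ct1, Cfun]
      have hax : 0 ≤ a ^ 2 * x - b ^ 2 * P2 := by linarith
      gcongr
  · intro p hp
    obtain ⟨hp1, hp2, hp3⟩ := hp
    simp only [Ct1, Cfun]
    have h0 : 0 ≤ (Real.sqrt (a ^ 2 * p.1 - b ^ 2 * p.2)
        + b * Real.sqrt ((a ^ 2 - 1) * p.2)) ^ 2 / (a ^ 2 * N) := by positivity
    exact div_nonneg (Real.log_nonneg (by linarith)) (by norm_num)
end
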